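/- arXiv:1902.05121 — 4 statements merged into one kernel-verified Lean document; each statement's English description precedes it below -/
import Mathlib

section
/- The matrix M_λ - C is invertible, where M_λ is the diagonal matrix with entries λ_x = Σ_y C_{x,y} + κ_x and C is the symmetric matrix of conductances; more precisely, M_λ - C is positive definite. -/
/-!
Expanding the quadratic form and symmetrising the cross terms gives
`vᵀ (M_λ - C) v = ∑ₓ κₓ vₓ² + ½ ∑ₓ ∑ᵧ Cₓᵧ (vₓ - vᵧ)²`, a sum of nonnegative terms.
If it vanishes, `v` is constant along every edge of positive conductance and vanishes wherever
`κ > 0`; since every vertex is joined to such a point, `v = 0`.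
-/

open Matrix Finset

namespace Matrix

variable {X R : Type*} [Fintype X]

theorem dotProduct_diagonal_mulVec [DecidableEq X] [CommSemiring R] (d v : X → R) :
    v ⬝ᵥ (diagonal d *ᵥ v) = ∑ x, d x * v x ^ 2 := by
  simp only [dotProduct, mulVec_diagonal]
  exact sum_congr rfl fun x _ => by ring

theorem two_mul_dotProduct_laplacian_mulVec [DecidableEq X] [CommRing R] {C : Matrix X X R}
    (hC : C.IsSymm) (v : X → R) :
    2 * (v ⬝ᵥ ((diagonal fun x => ∑ y, C x y) - C) *ᵥ v) =
      ∑ x, ∑ y, C x y * (v x - v y) ^ 2 := by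
  have hswap : ∑ x, ∑ y, C x y * v y ^ 2 = ∑ x, ∑ y, C x y * v x ^ 2 := by
    rw [sum_comm]
    exact sum_congr rfl fun x _ => sum_congr rfl fun y _ => by rw [hC.apply]
  have hcross : v ⬝ᵥ (C *ᵥ v) = ∑ x, ∑ y, C x y * (v x * v y) := by
    simp only [dotProduct, mulVec, mul_sum]
    exact sum_congr rfl fun x _ => sum_congr rfl fun y _ => by ring
  have hsq (x y : X) : C x y * (v x - v y) ^ 2 =
      C x y * v x ^ 2 + C x y * v y ^ 2 - 2 * (C x y * (v x * v y)) := by ring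
  simp only [sub_mulVec, dotProduct_sub, dotProduct_diagonal_mulVec, hcross, hsq,
    sum_sub_distrib, sum_add_distrib, hswap, sum_mul, ← mul_sum]
  ring

theorem two_mul_dotProduct_diagonal_add_sub_mulVec [DecidableEq X] [CommRing R]
    {C : Matrix X X R} (hC : C.IsSymm) (κ v : X → R) :
    2 * (v ⬝ᵥ ((diagonal fun x => ∑ y, C x y + κ x) - C) *ᵥ v) =
      2 * ∑ x, κ x * v x ^ 2 + ∑ x, ∑ y, C x y * (v x - v y) ^ 2 := by
  rw [← two_mul_dotProduct_laplacian_mulVec hC, ← dotProduct_diagonal_mulVec,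
    ← diagonal_add, add_sub_right_comm, add_mulVec, dotProduct_add]
  ring

end Matrix

theorem Finset.sum_mul_sq_eq_zero_iff {ι R : Type*}
    [Ring R] [LinearOrder R] [IsStrictOrderedRing R] {s : Finset ι} {w a : ι → R} (hw : ∀ i ∈ s, 0 ≤ w i) :
    ∑ i ∈ s, w i * a i ^ 2 = 0 ↔ ∀ i ∈ s, 0 < w i → a i = 0 := by
  rw [sum_eq_zero_iff_of_nonneg fun i hi => mul_nonneg (hw i hi) (sq_nonneg _)]
  refine forall₂_congr fun i hi => ⟨fun h hwi => ?_, fun h => ?_⟩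
  · exact pow_eq_zero_iff two_ne_zero |>.1 <| (mul_eq_zero.1 h).resolve_left hwi.ne'
  · rcases (hw i hi).lt_or_eq with hwi | hwi
    · simp [h hwi]
    · simp [← hwi]

theorem Relation.ReflTransGen.apply_eq {α β : Type*} {r : α → α → Prop} {f : α → β}
    (h : ∀ a b, r a b → f a = f b) {a b : α} (hab : Relation.ReflTransGen r a b) : f a = f b := by
  simpa [Relation.reflTransGen_eq_self] using hab.lift f h

theorem matrix_diagonal_sub_conductance_posDef_general
    {X : Type*} [Fintype X] [DecidableEq X]
    (C : Matrix X X ℝ) (κ : X → ℝ)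
    (hsymm : ∀ x y, C x y = C y x)
    (hnonneg : ∀ x y, 0 ≤ C x y)
    (hκ : ∀ x, 0 ≤ κ x)
    (hconn : ∀ x : X, ∃ y : X,
      Relation.ReflTransGen (fun a b => 0 < C a b) x y ∧ 0 < κ y) :
    (Matrix.diagonal (fun x => ∑ y, C x y + κ x) - C).PosDef := by
  have hC : C.IsSymm := IsSymm.ext fun x y => hsymm y x
  rw [posDef_iff_dotProduct_mulVec]
  refine ⟨isHermitian_iff_isSymm.2 ((isSymm_diagonal _).sub hC), fun v hv => ?_⟩
  have hform := two_mul_dotProduct_diagonal_add_sub_mulVec hC κ v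
  have hK : 0 ≤ ∑ x, κ x * v x ^ 2 := sum_nonneg fun x _ => mul_nonneg (hκ x) (sq_nonneg _)
  have hS (x : X) : 0 ≤ ∑ y, C x y * (v x - v y) ^ 2 :=
    sum_nonneg fun y _ => mul_nonneg (hnonneg x y) (sq_nonneg _)
  have hSsum : 0 ≤ ∑ x, ∑ y, C x y * (v x - v y) ^ 2 := sum_nonneg fun x _ => hS x
  rw [star_trivial]
  refine lt_of_le_of_ne (by linarith) fun h0 => hv ?_
  have hK0 : ∑ x, κ x * v x ^ 2 = 0 := by linarith
  have hS0 : ∑ x, ∑ y, C x y * (v x - v y) ^ 2 = 0 := by linarith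
  have hzero (y : X) (hy : 0 < κ y) : v y = 0 :=
    (sum_mul_sq_eq_zero_iff fun x _ => hκ x).1 hK0 y (mem_univ y) hy
  have hedge (a b : X) (hab : 0 < C a b) : v a = v b :=
    sub_eq_zero.1 <| (sum_mul_sq_eq_zero_iff fun y _ => hnonneg a y).1
      ((sum_eq_zero_iff_of_nonneg fun x _ => hS x).1 hS0 a (mem_univ a)) b (mem_univ b) hab
  funext x
  obtain ⟨y, hxy, hy⟩ := hconn x
  exact (hxy.apply_eq hedge).trans (hzero y hy)

/-- With `λ x = ∑ y, C x y + κ x`, under the connectivity assumption,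
the matrix `M_λ - C` is positive definite (in particular invertible). -/
theorem matrix_diagonal_sub_conductance_posDef
    {X : Type*} [Fintype X] [Nonempty X] [DecidableEq X]
    (C : Matrix X X ℝ) (κ : X → ℝ)
    (hsymm : ∀ x y, C x y = C y x)
    (hnonneg : ∀ x y, 0 ≤ C x y)
    (hdiag : ∀ x, C x x = 0)
    (hκ : ∀ x, 0 ≤ κ x)
    (hconn : ∀ x : X, ∃ y : X,
      Relation.ReflTransGen (fun a b => 0 < C a b) x y ∧ 0 < κ y) :
    (Matrix.diagonal (fun x => ∑ y, C x y + κ x) - C).PosDef :=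
  matrix_diagonal_sub_conductance_posDef_general C κ hsymm hnonneg hκ hconn
end

section
/- The Green function G = (M_λ - C)^{-1} is a reproducing kernel for the energy form: for all x, y ∈ X, 𝔈(G^{x,·}, G^{y,·}) = G^{x,y}, where G^{x,·} denotes the x-th row of G. -/
/-- The energy form `𝔈(f,g)`. -/
noncomputable def energyForm {X : Type*} [Fintype X]
    (C : Matrix X X ℝ) (κ : X → ℝ) (f g : X → ℝ) : ℝ :=
  (1 / 2) * ∑ x, ∑ y, C x y * (f x - f y) * (g x - g y) + ∑ x, κ x * f x * g x

/-!
Summing by parts with the symmetry of `C` gives `𝔈(f, g) = ⟨f, (M_λ - C) g⟩`. As `M_λ - C` is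
symmetric, so is `G`, hence the row `G^{y,·}` is also the column `G^{·,y}` and
`(M_λ - C) G^{y,·} = δ_y`; pairing with `G^{x,·}` leaves `G^{x,y}`.
-/

open Matrix

theorem Matrix.IsSymm.mulVec_inv_row {n α : Type*} [Fintype n] [DecidableEq n] [CommRing α]
    {A : Matrix n n α} (hA : A.IsSymm) (hdet : IsUnit A.det) (y : n) :
    A *ᵥ A⁻¹ y = Pi.single y 1 := by
  have hrow : A⁻¹ y = A⁻¹ *ᵥ Pi.single y 1 := by
    rw [mulVec_single_one]
    exact funext fun z => hA.inv.apply z y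
  rw [hrow, mulVec_mulVec, mul_nonsing_inv A hdet, one_mulVec]

section EnergyForm

variable {X : Type*} [Fintype X]

theorem sum_sum_mul_sub_mul_sub_of_symm {R : Type*} [CommRing R] {C : X → X → R}
    (hC : ∀ x y, C x y = C y x) (f g : X → R) :
    ∑ x, ∑ y, C x y * (f x - f y) * (g x - g y) = 2 * ∑ x, f x * ∑ y, C x y * (g x - g y) := by
  have hswap : ∑ x, ∑ y, C x y * f y * (g x - g y) = -∑ x, ∑ y, C x y * f x * (g x - g y) := by
    rw [Finset.sum_comm, ← Finset.sum_neg_distrib]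
    refine Finset.sum_congr rfl fun x _ => ?_
    rw [← Finset.sum_neg_distrib]
    refine Finset.sum_congr rfl fun y _ => ?_
    rw [hC]; ring
  calc ∑ x, ∑ y, C x y * (f x - f y) * (g x - g y)
      = ∑ x, ∑ y, C x y * f x * (g x - g y) - ∑ x, ∑ y, C x y * f y * (g x - g y) := by
        rw [← Finset.sum_sub_distrib]
        refine Finset.sum_congr rfl fun x _ => ?_
        rw [← Finset.sum_sub_distrib]
        exact Finset.sum_congr rfl fun y _ => by ring
    _ = 2 * ∑ x, f x * ∑ y, C x y * (g x - g y) := by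
        rw [hswap, sub_neg_eq_add, ← two_mul]
        congr 1
        refine Finset.sum_congr rfl fun x _ => ?_
        rw [Finset.mul_sum]
        exact Finset.sum_congr rfl fun y _ => by ring

/-- `M_λ - C`, whose inverse is the Green function `G`. -/
noncomputable def energyOperator [DecidableEq X] (C : Matrix X X ℝ) (κ : X → ℝ) : Matrix X X ℝ :=
  Matrix.diagonal (fun x => ∑ y, C x y + κ x) - C

theorem energyOperator_mulVec_apply [DecidableEq X] (C : Matrix X X ℝ) (κ : X → ℝ)
    (g : X → ℝ) (x : X) :
    (energyOperator C κ *ᵥ g) x = ∑ y, C x y * (g x - g y) + κ x * g x := by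
  rw [energyOperator, sub_mulVec, Pi.sub_apply, mulVec_diagonal]
  simp only [mulVec, dotProduct, mul_sub, Finset.sum_sub_distrib, add_mul, Finset.sum_mul]
  ring

theorem energyForm_eq_dotProduct_energyOperator_mulVec [DecidableEq X] {C : Matrix X X ℝ}
    (hC : ∀ x y, C x y = C y x) (κ : X → ℝ) (f g : X → ℝ) :
    energyForm C κ f g = f ⬝ᵥ energyOperator C κ *ᵥ g := by
  have hκ : ∑ x, f x * (κ x * g x) = ∑ x, κ x * f x * g x :=
    Finset.sum_congr rfl fun x _ => by ring
  rw [energyForm, sum_sum_mul_sub_mul_sub_of_symm hC]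
  simp only [dotProduct, energyOperator_mulVec_apply, mul_add, Finset.sum_add_distrib, hκ]
  ring

theorem energyOperator_isSymm [DecidableEq X] {C : Matrix X X ℝ} (hC : ∀ x y, C x y = C y x)
    (κ : X → ℝ) : (energyOperator C κ).IsSymm :=
  (isSymm_diagonal _).sub (IsSymm.ext fun i j => hC j i)

end EnergyForm

theorem energyForm_green_reproducing_general
    {X : Type*} [Fintype X] [DecidableEq X]
    (C : Matrix X X ℝ) (κ : X → ℝ)
    (hsymm : ∀ x y, C x y = C y x)
    (hpd : (Matrix.diagonal (fun x => ∑ y, C x y + κ x) - C).PosDef)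
    (x y : X) :
    energyForm C κ
      (fun z => (Matrix.diagonal (fun x => ∑ y, C x y + κ x) - C)⁻¹ x z)
      (fun z => (Matrix.diagonal (fun x => ∑ y, C x y + κ x) - C)⁻¹ y z)
      = (Matrix.diagonal (fun x => ∑ y, C x y + κ x) - C)⁻¹ x y := by
  change energyForm C κ ((energyOperator C κ)⁻¹ x) ((energyOperator C κ)⁻¹ y)
    = (energyOperator C κ)⁻¹ x y
  rw [energyForm_eq_dotProduct_energyOperator_mulVec hsymm,
    (energyOperator_isSymm hsymm κ).mulVec_inv_row ((isUnit_iff_isUnit_det _).mp hpd.isUnit),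
    dotProduct_single_one]

/-- The Green function `G = (M_λ - C)⁻¹` is a reproducing kernel for the
energy form: `𝔈(G^{x,·}, G^{y,·}) = G^{x,y}`. -/
theorem energyForm_green_reproducing
    {X : Type*} [Fintype X] [DecidableEq X]
    (C : Matrix X X ℝ) (κ : X → ℝ)
    (hsymm : ∀ x y, C x y = C y x)
    (hdiag : ∀ x, C x x = 0)
    (hpd : (Matrix.diagonal (fun x => ∑ y, C x y + κ x) - C).PosDef)
    (x y : X) :
    energyForm C κ
      (fun z => (Matrix.diagonal (fun x => ∑ y, C x y + κ x) - C)⁻¹ x z)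
      (fun z => (Matrix.diagonal (fun x => ∑ y, C x y + κ x) - C)⁻¹ y z)
      = (Matrix.diagonal (fun x => ∑ y, C x y + κ x) - C)⁻¹ x y :=
  energyForm_green_reproducing_general C κ hsymm hpd x y
end

section
/- For a symmetric matrix q indexed by X × X with entries in [0,1] and χ : X → [0,∞), the matrix M_{λ+χ} - C ∘ q is positive definite; in particular det(M_{λ+χ} - C∘q) > 0 and 0 < det(M_λ - C)/det(M_{λ+χ} - C∘q) holds, and moreover det(M_λ - C) ≤ det(M_{λ+χ} - C∘q). -/
/-!
Both `A = M_λ - C` and `B = M_{λ+χ} - C∘q` are Z-matrices (nonpositive off the diagonal), and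
`A ≤ B` entrywise. Hence `xᵀBx ≥ |x|ᵀB|x| ≥ |x|ᵀA|x|`, so `B` inherits positive definiteness
from `A`. The determinant inequality is proved by induction on `|X|`: eliminating
an index `k` gives `det M = M_kk · det S_k(M)` for the Schur complement
`S_k(M)_ij = M_ij - M_ik M_kj / M_kk`. Schur complements of positive definite Z-matrices are
again positive definite Z-matrices, and `S_k(A) ≤ S_k(B)` because `0 ≤ B_ik B_kj ≤ A_ik A_kj`
and `0 < A_kk ≤ B_kk`.
-/

universe u

namespace Matrix

variable {n : Type u}

def IsZMatrix {R : Type*} [Zero R] [LE R] (M : Matrix n n R) : Prop :=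
  ∀ i j, i ≠ j → M i j ≤ 0

section QuadraticForm

variable [Fintype n]

theorem IsZMatrix.dotProduct_mulVec_abs_le {R : Type*} [CommRing R] [LinearOrder R]
    [IsStrictOrderedRing R] {M : Matrix n n R} (hM : M.IsZMatrix) (x : n → R) :
    |x| ⬝ᵥ M *ᵥ |x| ≤ x ⬝ᵥ M *ᵥ x := by
  simp only [dot_mulVec_eq_sum_sum, Pi.abs_apply]
  refine Finset.sum_le_sum fun j _ => Finset.sum_le_sum fun i _ => ?_
  obtain rfl | hij := eq_or_ne i j
  · rw [mul_right_comm, abs_mul_abs_self, mul_right_comm]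
  · calc |x i| * M i j * |x j| = M i j * (|x i| * |x j|) := by ring
      _ ≤ M i j * (x i * x j) := by
        rw [← abs_mul]; exact mul_le_mul_of_nonpos_left (le_abs_self _) (hM i j hij)
      _ = x i * M i j * x j := by ring

theorem dotProduct_mulVec_le_of_le {R : Type*} [CommSemiring R] [PartialOrder R] [IsOrderedRing R]
    {A B : Matrix n n R} (hAB : ∀ i j, A i j ≤ B i j) {v : n → R} (hv : 0 ≤ v) :
    v ⬝ᵥ A *ᵥ v ≤ v ⬝ᵥ B *ᵥ v := by
  simp only [dot_mulVec_eq_sum_sum]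
  gcongr with j _ i _
  · exact hv j
  · exact hv i
  · exact hAB i j

theorem PosDef.of_le_of_isZMatrix {A B : Matrix n n ℝ} (hA : A.PosDef) (hB : B.IsHermitian)
    (hBz : B.IsZMatrix) (hAB : ∀ i j, A i j ≤ B i j) : B.PosDef := by
  refine .of_dotProduct_mulVec_pos hB fun x hx => ?_
  have hx' : |x| ≠ 0 := by simpa using hx
  calc 0 < |x| ⬝ᵥ A *ᵥ |x| := by simpa using hA.dotProduct_mulVec_pos hx'
    _ ≤ |x| ⬝ᵥ B *ᵥ |x| := dotProduct_mulVec_le_of_le hAB (abs_nonneg x)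
    _ ≤ x ⬝ᵥ B *ᵥ x := hBz.dotProduct_mulVec_abs_le x
    _ = star x ⬝ᵥ B *ᵥ x := by simp

end QuadraticForm

section SchurComplement

variable {K : Type*} [Field K]

def schurCompl (M : Matrix n n K) (k : n) : Matrix {i // i ≠ k} {i // i ≠ k} K :=
  of fun i j => M i j - M i k * M k j / M k k

theorem schurCompl_eq_sub (M : Matrix n n K) (k : n) :
    schurCompl M k = M.submatrix (↑) (↑) -
      replicateCol PUnit.{u + 1} (fun i : {i // i ≠ k} => M i k) *
        (of fun _ _ => M k k : Matrix PUnit.{u + 1} PUnit.{u + 1} K)⁻¹ *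
          replicateRow PUnit.{u + 1} (fun j : {j // j ≠ k} => M k j) := by
  ext i j
  simp [schurCompl, mul_apply, div_eq_mul_inv, mul_right_comm]

variable [DecidableEq n]

theorem submatrix_subtypeNeSumPUnit {α : Type*} (M : Matrix n n α) (k : n) :
    M.submatrix (Equiv.subtypeNeSumPUnit k) (Equiv.subtypeNeSumPUnit k) =
      fromBlocks (M.submatrix (↑) (↑)) (replicateCol PUnit.{u + 1} fun i : {i // i ≠ k} => M i k)
        (replicateRow PUnit.{u + 1} fun j : {j // j ≠ k} => M k j) (of fun _ _ => M k k) := by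
  ext (i | i) (j | j) <;> rfl

variable [Fintype n]

theorem det_eq_mul_det_schurCompl (M : Matrix n n K) {k : n}
    (hk : M k k ≠ 0) : M.det = M k k * (schurCompl M k).det := by
  let _ : Invertible (of fun _ _ => M k k : Matrix PUnit.{u + 1} PUnit.{u + 1} K) :=
    invertibleOfIsUnitDet _ (by simpa using hk)
  rw [← det_submatrix_equiv_self (Equiv.subtypeNeSumPUnit k), submatrix_subtypeNeSumPUnit,
    det_fromBlocks₂₂, schurCompl_eq_sub, invOf_eq_nonsing_inv]
  simp

theorem PosDef.schurCompl {M : Matrix n n ℝ} (hM : M.PosDef) (k : n) :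
    (M.schurCompl k).PosDef := by
  have hD : (of fun _ _ => M k k : Matrix PUnit.{u + 1} PUnit.{u + 1} ℝ).PosDef :=
    hM.submatrix (e := fun _ : PUnit.{u + 1} => k) fun _ _ _ => rfl
  let _ := hD.isUnit.invertible
  have hblocks := hM.posSemidef.submatrix (Equiv.subtypeNeSumPUnit k)
  rw [submatrix_subtypeNeSumPUnit] at hblocks
  have hsymm : replicateRow PUnit.{u + 1} (fun j : {j // j ≠ k} => M k j) =
      (replicateCol PUnit.{u + 1} fun i : {i // i ≠ k} => M i k)ᴴ := by
    ext _ j; exact (hM.isHermitian.apply k j).symm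
  rw [hsymm, PosDef.fromBlocks₂₂ _ _ hD, ← hsymm, ← schurCompl_eq_sub] at hblocks
  refine hblocks.posDef_iff_det_ne_zero.mpr fun h => hM.det_pos.ne' ?_
  rw [det_eq_mul_det_schurCompl M hM.diag_pos.ne', h, mul_zero]

end SchurComplement

section ZMatrix

variable {K : Type*} [Field K] [LinearOrder K] [IsStrictOrderedRing K]

theorem IsZMatrix.schurCompl {M : Matrix n n K} (hM : M.IsZMatrix) {k : n} (hk : 0 < M k k) :
    (M.schurCompl k).IsZMatrix := fun i j hij => by
  have hprod : 0 ≤ M i k * M k j :=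
    mul_nonneg_of_nonpos_of_nonpos (hM i k i.2) (hM k j (Ne.symm j.2))
  have hij : M i j ≤ 0 := hM i j (Subtype.coe_ne_coe.mpr hij)
  simp only [Matrix.schurCompl, of_apply]
  linarith [div_nonneg hprod hk.le]

theorem schurCompl_le_schurCompl {A B : Matrix n n K} (hAB : ∀ i j, A i j ≤ B i j)
    (hB : B.IsZMatrix) {k : n} (hk : 0 < A k k) (i j : {i // i ≠ k}) :
    A.schurCompl k i j ≤ B.schurCompl k i j := by
  have hBik : B i k ≤ 0 := hB i k i.2
  have hBkj : B k j ≤ 0 := hB k j (Ne.symm j.2)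
  have hprod : B i k * B k j ≤ A i k * A k j :=
    mul_le_mul_of_nonpos_of_nonpos' (hAB i k) (hAB k j) hBik ((hAB k j).trans hBkj)
  calc A i j - A i k * A k j / A k k
      ≤ B i j - B i k * B k j / A k k :=
        sub_le_sub (hAB i j) (div_le_div_of_nonneg_right hprod hk.le)
    _ ≤ B i j - B i k * B k j / B k k := by
        gcongr
        · exact mul_nonneg_of_nonpos_of_nonpos hBik hBkj
        · exact hAB k k

end ZMatrix

theorem det_le_det_of_le [Fintype n] [DecidableEq n] {A B : Matrix n n ℝ} (hA : A.PosDef)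
    (hB : B.PosDef) (hBz : B.IsZMatrix) (hAB : ∀ i j, A i j ≤ B i j) : A.det ≤ B.det := by
  induction hcard : Fintype.card n generalizing n with
  | zero =>
    have := Fintype.card_eq_zero_iff.mp hcard
    simp
  | succ m ih =>
    obtain ⟨k⟩ : Nonempty n := Fintype.card_pos_iff.mp (by omega)
    have hSAB : (A.schurCompl k).det ≤ (B.schurCompl k).det :=
      ih (hA.schurCompl k) (hB.schurCompl k) (hBz.schurCompl hB.diag_pos)
        (schurCompl_le_schurCompl hAB hBz hA.diag_pos)
        (by simp [Fintype.card_subtype_compl, hcard])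
    rw [det_eq_mul_det_schurCompl A hA.diag_pos.ne', det_eq_mul_det_schurCompl B hB.diag_pos.ne']
    exact mul_le_mul (hAB k k) hSAB (hA.schurCompl k).det_pos.le hB.diag_pos.le

end Matrix

open Matrix

theorem perturbed_matrix_posDef_and_det_ineq_general
    {X : Type*} [Fintype X] [DecidableEq X]
    (C : Matrix X X ℝ) (κ χ : X → ℝ)
    (hsymm : ∀ x y, C x y = C y x)
    (hnonneg : ∀ x y, 0 ≤ C x y)
    (hχ : ∀ x, 0 ≤ χ x)
    (hpd : (Matrix.diagonal (fun x => ∑ y, C x y + κ x) - C).PosDef)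
    (q : Matrix X X ℝ)
    (hq : ∀ x y, q x y = q y x) (hq0 : ∀ x y, 0 ≤ q x y) (hq1 : ∀ x y, q x y ≤ 1) :
    (Matrix.diagonal (fun x => ∑ y, C x y + κ x + χ x)
      - Matrix.of (fun x y => C x y * q x y)).PosDef ∧
    0 < (Matrix.diagonal (fun x => ∑ y, C x y + κ x + χ x)
      - Matrix.of (fun x y => C x y * q x y)).det ∧
    (Matrix.diagonal (fun x => ∑ y, C x y + κ x) - C).det
      ≤ (Matrix.diagonal (fun x => ∑ y, C x y + κ x + χ x)
          - Matrix.of (fun x y => C x y * q x y)).det := by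
  set A := Matrix.diagonal (fun x => ∑ y, C x y + κ x) - C
  set B := Matrix.diagonal (fun x => ∑ y, C x y + κ x + χ x)
    - Matrix.of (fun x y => C x y * q x y)
  have hCq : ∀ x y, C x y * q x y ≤ C x y := fun x y =>
    mul_le_of_le_one_right (hnonneg x y) (hq1 x y)
  have hBz : B.IsZMatrix := fun x y hxy => by
    simpa [B, hxy] using mul_nonneg (hnonneg x y) (hq0 x y)
  have hBH : B.IsHermitian := by
    ext x y
    obtain rfl | hxy := eq_or_ne x y
    · rfl
    · simp [B, hxy, Ne.symm hxy, hsymm x y, hq x y]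
  have hAB : ∀ x y, A x y ≤ B x y := fun x y => by
    obtain rfl | hxy := eq_or_ne x y
    · simp only [A, B, Matrix.sub_apply, diagonal_apply_eq, of_apply]
      linarith [hχ x, hCq x x]
    · simpa [A, B, hxy] using hCq x y
  have hB : B.PosDef := hpd.of_le_of_isZMatrix hBH hBz hAB
  exact ⟨hB, hB.det_pos, det_le_det_of_le hpd hB hBz hAB⟩

/-- For symmetric `q` with entries in `[0,1]` and `χ ≥ 0`, the matrix
`M_{λ+χ} - C∘q` is positive definite; in particular its determinant is positive, so
`0 < det(M_λ - C)/det(M_{λ+χ} - C∘q)`, and moreover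
`det(M_λ - C) ≤ det(M_{λ+χ} - C∘q)`. -/
theorem perturbed_matrix_posDef_and_det_ineq
    {X : Type*} [Fintype X] [DecidableEq X]
    (C : Matrix X X ℝ) (κ χ : X → ℝ)
    (hsymm : ∀ x y, C x y = C y x)
    (hnonneg : ∀ x y, 0 ≤ C x y)
    (hdiag : ∀ x, C x x = 0)
    (hκ : ∀ x, 0 ≤ κ x)
    (hχ : ∀ x, 0 ≤ χ x)
    (hpd : (Matrix.diagonal (fun x => ∑ y, C x y + κ x) - C).PosDef)
    (q : Matrix X X ℝ)
    (hq : ∀ x y, q x y = q y x) (hq0 : ∀ x y, 0 ≤ q x y) (hq1 : ∀ x y, q x y ≤ 1) :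
    (Matrix.diagonal (fun x => ∑ y, C x y + κ x + χ x)
      - Matrix.of (fun x y => C x y * q x y)).PosDef ∧
    0 < (Matrix.diagonal (fun x => ∑ y, C x y + κ x + χ x)
      - Matrix.of (fun x y => C x y * q x y)).det ∧
    (Matrix.diagonal (fun x => ∑ y, C x y + κ x) - C).det
      ≤ (Matrix.diagonal (fun x => ∑ y, C x y + κ x + χ x)
          - Matrix.of (fun x y => C x y * q x y)).det :=
  perturbed_matrix_posDef_and_det_ineq_general C κ χ hsymm hnonneg hχ hpd q hq hq0 hq1
end

section
/- Holonomy classifies connections: two connection representatives m and m' on a finite connected graph are gauge-equivalent if and only if for every closed walk based at a fixed vertex x_0, the holonomy products of m and m' along the walk are conjugate by a single element g ∈ M independent of the walk (i.e., the induced homomorphisms from the group of closed walks at x_0 modulo backtracking to M agree up to conjugation). -/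
/-!
A gauge `h` multiplies the holonomy of a walk from `a` to `b` by `h a` on the left and by
`(h b)⁻¹` on the right, so on closed walks at `x₀` it acts as conjugation by `h x₀`.
Conversely, given `g`, choose a walk `p x` from `x₀` to every vertex `x` and put
`h x = (hol_{m'} (p x))⁻¹ * g * hol_m (p x)`; the hypothesis applied to the closed walk
`p x`, then the edge `x → y`, then `p y` backwards, is exactly the gauge relation on that edge.
-/

theorem List.prod_map_range_eq_mul_mul_inv {M : Type*} [Group M] (f g h : ℕ → M) (n : ℕ)
    (hfg : ∀ i < n, f i = h i * g i * (h (i + 1))⁻¹) :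
    ((range n).map f).prod = h 0 * ((range n).map g).prod * (h n)⁻¹ := by
  induction n with
  | zero => simp
  | succ n ih =>
    rw [prod_range_succ, prod_range_succ, ih fun i hi => hfg i (by omega), hfg n (by omega)]
    group

namespace SimpleGraph.Walk

variable {V M : Type*} [Group M] {G : SimpleGraph V}

def holonomy (m : V → V → M) {u v : V} (p : G.Walk u v) : M :=
  (p.darts.map fun d => m d.fst d.snd).prod

variable (m : V → V → M)

@[simp]
theorem holonomy_cons {u v w : V} (h : G.Adj u v) (p : G.Walk v w) :
    (cons h p).holonomy m = m u v * p.holonomy m := rfl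

@[simp]
theorem holonomy_append {u v w : V} (p : G.Walk u v) (q : G.Walk v w) :
    (p.append q).holonomy m = p.holonomy m * q.holonomy m := by
  simp [holonomy]

theorem holonomy_reverse (hm : ∀ x y, m y x = (m x y)⁻¹) {u v : V} (p : G.Walk u v) :
    p.reverse.holonomy m = (p.holonomy m)⁻¹ := by
  simp only [holonomy, darts_reverse, List.map_reverse, List.map_map, List.prod_inv_reverse]
  congr 2
  exact List.map_congr_left fun d _ => hm d.fst d.snd

theorem holonomy_eq_prod_map_range {u v : V} (p : G.Walk u v) :
    p.holonomy m =
      ((List.range p.length).map fun i => m (p.getVert i) (p.getVert (i + 1))).prod := by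
  unfold holonomy
  congr 1
  apply List.ext_getElem (by simp)
  intro n h₁ h₂
  simp [darts_getElem_eq_getVert]

end SimpleGraph.Walk

open SimpleGraph Walk

theorem SimpleGraph.Preconnected.exists_gauge_of_holonomy_conj {V M : Type*} [Group M]
    {G : SimpleGraph V} (hG : G.Preconnected) {x₀ : V} {m m' : V → V → M}
    (hm : ∀ x y, m y x = (m x y)⁻¹) (hm' : ∀ x y, m' y x = (m' x y)⁻¹) {g : M}
    (hg : ∀ w : G.Walk x₀ x₀, w.holonomy m' = g * w.holonomy m * g⁻¹) :
    ∃ h : V → M, ∀ x y, G.Adj x y → m' x y = h x * m x y * (h y)⁻¹ := by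
  let p : ∀ x, G.Walk x₀ x := fun x => (hG x₀ x).some
  refine ⟨fun x => ((p x).holonomy m')⁻¹ * g * (p x).holonomy m, fun x y hxy => ?_⟩
  have hloop := hg ((p x).append (cons hxy (p y).reverse))
  simp only [holonomy_append, holonomy_cons, holonomy_reverse _ hm, holonomy_reverse _ hm']
    at hloop
  calc m' x y
      = ((p x).holonomy m')⁻¹ * ((p x).holonomy m' * (m' x y * ((p y).holonomy m')⁻¹))
          * (p y).holonomy m' := by group
    _ = ((p x).holonomy m')⁻¹ * g * (p x).holonomy m * m x y
          * (((p y).holonomy m')⁻¹ * g * (p y).holonomy m)⁻¹ := by rw [hloop]; group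

theorem gauge_equivalent_iff_holonomy_conjugate_general
    {V M : Type*} [Group M]
    (G : SimpleGraph V) (hconn : G.Connected) (x₀ : V)
    (m m' : V → V → M)
    (hm : ∀ x y, m y x = (m x y)⁻¹) (hm' : ∀ x y, m' y x = (m' x y)⁻¹) :
    (∃ h : V → M, ∀ x y, G.Adj x y → m' x y = h x * m x y * (h y)⁻¹)
      ↔ ∃ g : M, ∀ (n : ℕ) (x : ℕ → V), x 0 = x₀ → x n = x₀ →
          (∀ i < n, G.Adj (x i) (x (i + 1))) →
          (((List.range n).map (fun i => m' (x i) (x (i + 1)))).prod)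
            = g * (((List.range n).map (fun i => m (x i) (x (i + 1)))).prod) * g⁻¹ := by
  constructor
  · rintro ⟨h, hh⟩
    refine ⟨h x₀, fun n x h0 hn hadj => ?_⟩
    rw [List.prod_map_range_eq_mul_mul_inv _ _ (h ∘ x) n fun i hi => hh _ _ (hadj i hi)]
    simp [h0, hn]
  · rintro ⟨g, hg⟩
    refine hconn.preconnected.exists_gauge_of_holonomy_conj (x₀ := x₀) (g := g) hm hm'
      fun w => ?_
    simpa only [← holonomy_eq_prod_map_range] using
      hg w.length w.getVert w.getVert_zero w.getVert_length fun i hi => w.adj_getVert_succ hi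

/-- Holonomy classifies connections: on a finite connected graph, two
connection representatives `m`, `m'` are gauge-equivalent iff there is a single `g ∈ M`
conjugating all holonomies at the base vertex `x₀`: for every closed walk at `x₀`, the
product of `m'`-values equals `g · (product of m-values) · g⁻¹`. -/
theorem gauge_equivalent_iff_holonomy_conjugate
    {V M : Type*} [Fintype V] [Group M]
    (G : SimpleGraph V) (hconn : G.Connected) (x₀ : V)
    (m m' : V → V → M)
    (hm : ∀ x y, m y x = (m x y)⁻¹) (hm' : ∀ x y, m' y x = (m' x y)⁻¹) :
    (∃ h : V → M, ∀ x y, G.Adj x y → m' x y = h x * m x y * (h y)⁻¹)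
      ↔ ∃ g : M, ∀ (n : ℕ) (x : ℕ → V), x 0 = x₀ → x n = x₀ →
          (∀ i < n, G.Adj (x i) (x (i + 1))) →
          (((List.range n).map (fun i => m' (x i) (x (i + 1)))).prod)
            = g * (((List.range n).map (fun i => m (x i) (x (i + 1)))).prod) * g⁻¹ :=
  gauge_equivalent_iff_holonomy_conjugate_general G hconn x₀ m m' hm hm'
end
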